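/- arXiv:1903.06134 — 2 statements merged into one kernel-verified Lean document; each statement's English description precedes it below -/
import Mathlib

section
/- Let G=(M,E) be a finite tree with |M| ≥ 2 and nonnegative edge weights w. Then the minimum of Σ_{j∈M} R_j over all feasible vectors R : M → ℝ equals Σ_{e∈E} w_e − min_{e∈E} w_e; that is, every feasible R satisfies Σ_{j∈M} R_j ≥ Σ_{e∈E} w_e − min_{e∈E} w_e, and there exists a feasible R attaining this value. -/
/-!
Cutting a tree at one edge `ab` splits its vertex set into two proper subsets whose inner
edges are all edges but `ab`, so feasibility of `R` on both sides gives
`∑ R ≥ ∑ w - w ab`; taking `ab` of minimal weight gives the lower bound.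

For the upper bound, root the tree at `a`, charge every edge other than `ab` to its endpoint
nearer to `a`, and let `R j` be the total weight charged to `j`. A proper subset `B` is charged
for all of its inner edges except possibly `ab`; if `ab` lies inside `B`, some edge leaves `B`
away from `a`, is charged to `B`, and weighs at least `w ab`.
-/

open scoped Classical

open Finset

namespace SimpleGraph

variable {V : Type*} {G : SimpleGraph V}

section Distance

variable {a : V}

lemma Connected.exists_adj_dist_lt (hc : G.Connected) {v : V} (hva : v ≠ a) :
    ∃ u, G.Adj v u ∧ G.dist u a < G.dist v a := by
  obtain ⟨p, hp⟩ := hc.exists_walk_length_eq_dist v a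
  cases p with
  | nil => exact absurd rfl hva
  | cons h q =>
    refine ⟨_, h, (dist_le q).trans_lt ?_⟩
    rw [← hp, Walk.length_cons]
    exact Nat.lt_succ_self _

lemma Connected.exists_adj_mem_notMem_dist_lt [Fintype V] (hc : G.Connected) {B : Finset V}
    (ha : a ∈ B) (hB : B ⊂ univ) :
    ∃ x y, G.Adj x y ∧ x ∈ B ∧ y ∉ B ∧ G.dist x a < G.dist y a := by
  obtain ⟨v, -, hv⟩ := exists_of_ssubset hB
  obtain ⟨y, hy, hmin⟩ := Bᶜ.exists_min_image (G.dist · a) ⟨v, mem_compl.mpr hv⟩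
  rw [mem_compl] at hy
  obtain ⟨x, hxy, hlt⟩ := hc.exists_adj_dist_lt (v := y) fun h => hy (h ▸ ha)
  refine ⟨x, y, hxy.symm, ?_, hy, hlt⟩
  by_contra hx
  exact (hmin x (mem_compl.mpr hx)).not_gt hlt

lemma exists_nearest_endpoint (G : SimpleGraph V) (a : V) (e : Sym2 V) :
    ∃ j ∈ e, ∀ k ∈ e, G.dist j a ≤ G.dist k a := by
  induction e using Sym2.ind with
  | _ x y =>
    rcases le_total (G.dist x a) (G.dist y a) with h | h
    · exact ⟨x, Sym2.mem_mk_left x y, by simp [h]⟩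
    · exact ⟨y, Sym2.mem_mk_right x y, by simp [h]⟩

end Distance

lemma IsBridge.exists_cut [Fintype V] {a b : V} (h : G.IsBridge s(a, b)) :
    ∃ A : Finset V, a ∈ A ∧ b ∉ A ∧
      ∀ x y, G.Adj x y → s(x, y) ≠ s(a, b) → (x ∈ A ↔ y ∈ A) := by
  set H := G.deleteEdges {s(a, b)}
  refine ⟨univ.filter (H.Reachable a ·), by simp, by simpa using isBridge_iff.mp h,
    fun x y hxy hne => ?_⟩
  have hH : H.Adj x y := by simp [H, hxy, hne]
  simp only [mem_filter, mem_univ, true_and]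
  exact ⟨fun hx => hx.trans hH.reachable, fun hy => hy.trans hH.symm.reachable⟩

lemma exists_adj_sInf_image_edgeSet_eq [Finite V] (hne : G.edgeSet.Nonempty) (w : Sym2 V → ℝ) :
    ∃ a b, G.Adj a b ∧ sInf (w '' G.edgeSet) = w s(a, b) ∧ ∀ e ∈ G.edgeSet, w s(a, b) ≤ w e := by
  obtain ⟨e, he, hmin⟩ := G.edgeSet.exists_min_image w G.edgeSet.toFinite hne
  induction e using Sym2.ind with
  | _ a b =>
    have hleast : IsLeast (w '' G.edgeSet) (w s(a, b)) :=
      ⟨⟨_, he, rfl⟩, by rintro _ ⟨e, he', rfl⟩; exact hmin e he'⟩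
    exact ⟨a, b, he, hleast.csInf_eq, hmin⟩

section Feasible

variable [Fintype V]

noncomputable def edgesWithin (G : SimpleGraph V) (B : Finset V) : Finset (Sym2 V) :=
  G.edgeFinset.filter (fun e => ∀ v ∈ e, v ∈ B)

def IsFeasible (G : SimpleGraph V) (w : Sym2 V → ℝ) (R : V → ℝ) : Prop :=
  (∀ j, 0 ≤ R j) ∧ ∀ B : Finset V, B ⊂ univ → ∑ e ∈ G.edgesWithin B, w e ≤ ∑ j ∈ B, R j

variable {w : Sym2 V → ℝ}

lemma mk_mem_edgesWithin {B : Finset V} {x y : V} :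
    s(x, y) ∈ G.edgesWithin B ↔ G.Adj x y ∧ x ∈ B ∧ y ∈ B := by
  simp [edgesWithin]

lemma disjoint_edgesWithin_compl (A : Finset V) :
    Disjoint (G.edgesWithin A) (G.edgesWithin Aᶜ) := by
  refine Finset.disjoint_left.mpr fun e heA heAc => ?_
  induction e using Sym2.ind with
  | _ x y =>
    exact (mem_compl.mp (mk_mem_edgesWithin.mp heAc).2.1) (mk_mem_edgesWithin.mp heA).2.1

lemma sum_sub_le_sum_of_isBridge (hw : ∀ e ∈ G.edgeFinset, 0 ≤ w e) {R : V → ℝ}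
    (hR : G.IsFeasible w R) {a b : V} (hab : G.Adj a b) (hbr : G.IsBridge s(a, b)) :
    ∑ e ∈ G.edgeFinset, w e - w s(a, b) ≤ ∑ j, R j := by
  obtain ⟨A, haA, hbA, hcut⟩ := hbr.exists_cut
  have hA : A ⊂ univ := ssubset_univ_iff.mpr fun h => hbA (h ▸ mem_univ b)
  have hAc : Aᶜ ⊂ univ := ssubset_univ_iff.mpr fun h => (mem_compl.mp (h ▸ mem_univ a)) haA
  have hsplit : G.edgeFinset.erase s(a, b) ⊆ G.edgesWithin A ∪ G.edgesWithin Aᶜ := by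
    intro e he
    induction e using Sym2.ind with
    | _ x y =>
      obtain ⟨hne, hxy⟩ := mem_erase.mp he
      rw [mem_edgeFinset, mem_edgeSet] at hxy
      have hiff := hcut x y hxy hne
      by_cases hx : x ∈ A
      · exact mem_union_left _ (mk_mem_edgesWithin.mpr ⟨hxy, hx, hiff.mp hx⟩)
      · exact mem_union_right _
          (mk_mem_edgesWithin.mpr ⟨hxy, mem_compl.mpr hx, mem_compl.mpr (hiff.not.mp hx)⟩)
  have hnonneg : ∀ e ∈ G.edgesWithin A ∪ G.edgesWithin Aᶜ, 0 ≤ w e := by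
    intro e he
    rcases mem_union.mp he with he | he <;> exact hw e (mem_filter.mp he).1
  calc ∑ e ∈ G.edgeFinset, w e - w s(a, b)
      = ∑ e ∈ G.edgeFinset.erase s(a, b), w e := by
        rw [sub_eq_iff_eq_add, sum_erase_add _ _ (mem_edgeFinset.mpr hab)]
    _ ≤ ∑ e ∈ G.edgesWithin A ∪ G.edgesWithin Aᶜ, w e :=
        sum_le_sum_of_subset_of_nonneg hsplit fun e he _ => hnonneg e he
    _ = ∑ e ∈ G.edgesWithin A, w e + ∑ e ∈ G.edgesWithin Aᶜ, w e :=
        sum_union (disjoint_edgesWithin_compl A)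
    _ ≤ ∑ j ∈ A, R j + ∑ j ∈ Aᶜ, R j := add_le_add (hR.2 A hA) (hR.2 Aᶜ hAc)
    _ = ∑ j, R j := sum_add_sum_compl A R

lemma sum_edgesWithin_le_sum_charged (hc : G.Connected) (hw : ∀ e ∈ G.edgeFinset, 0 ≤ w e)
    {a b : V} (hmin : ∀ e ∈ G.edgeSet, w s(a, b) ≤ w e) {g : Sym2 V → V}
    (hg_mem : ∀ e, g e ∈ e) (hg_min : ∀ e, ∀ k ∈ e, G.dist (g e) a ≤ G.dist k a)
    {B : Finset V} (hB : B ⊂ univ) :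
    ∑ e ∈ G.edgesWithin B, w e ≤ ∑ e ∈ (G.edgeFinset.erase s(a, b)).filter (g · ∈ B), w e := by
  set S := (G.edgeFinset.erase s(a, b)).filter (g · ∈ B)
  have hS : (G.edgesWithin B).erase s(a, b) ⊆ S := by
    intro e he
    obtain ⟨hne, he⟩ := mem_erase.mp he
    obtain ⟨hE, hB⟩ := mem_filter.mp he
    exact mem_filter.mpr ⟨mem_erase.mpr ⟨hne, hE⟩, hB _ (hg_mem e)⟩
  have hS_nonneg : ∀ e ∈ S, 0 ≤ w e := fun e he => hw e (mem_of_mem_erase (mem_filter.mp he).1)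
  by_cases hin : s(a, b) ∉ G.edgesWithin B
  · rw [← erase_eq_of_notMem hin]
    exact sum_le_sum_of_subset_of_nonneg hS fun e he _ => hS_nonneg e he
  rw [not_not] at hin
  obtain ⟨-, haB, hbB⟩ := mk_mem_edgesWithin.mp hin
  obtain ⟨x, y, hxy, hxB, hyB, hlt⟩ := hc.exists_adj_mem_notMem_dist_lt haB hB
  have hgxy : g s(x, y) = x := by
    rcases Sym2.mem_iff.mp (hg_mem s(x, y)) with h | h
    · exact h
    · have := hg_min s(x, y) x (Sym2.mem_mk_left x y)
      rw [h] at this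
      omega
  have hxy_out : s(x, y) ∉ G.edgesWithin B := fun h => hyB (mk_mem_edgesWithin.mp h).2.2
  have hxy_ne : s(x, y) ≠ s(a, b) := fun h => hxy_out (h ▸ hin)
  have hxyS : s(x, y) ∈ S := mem_filter.mpr
    ⟨mem_erase.mpr ⟨hxy_ne, mem_edgeFinset.mpr hxy⟩, by rw [hgxy]; exact hxB⟩
  calc ∑ e ∈ G.edgesWithin B, w e
      ≤ ∑ e ∈ insert s(x, y) ((G.edgesWithin B).erase s(a, b)), w e := by
        rw [sum_insert fun h => hxy_out (mem_of_mem_erase h), ← sum_erase_add _ _ hin, add_comm]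
        exact add_le_add_left (hmin _ hxy) _
    _ ≤ ∑ e ∈ S, w e :=
        sum_le_sum_of_subset_of_nonneg (insert_subset hxyS hS) fun e he _ => hS_nonneg e he

lemma exists_isFeasible_sum_eq (hc : G.Connected) (hw : ∀ e ∈ G.edgeFinset, 0 ≤ w e)
    {a b : V} (hab : G.Adj a b) (hmin : ∀ e ∈ G.edgeSet, w s(a, b) ≤ w e) :
    ∃ R, G.IsFeasible w R ∧ ∑ j, R j = ∑ e ∈ G.edgeFinset, w e - w s(a, b) := by
  choose g hg_mem hg_min using G.exists_nearest_endpoint a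
  set t := G.edgeFinset.erase s(a, b)
  refine ⟨fun j => ∑ e ∈ t.filter (g · = j), w e, ⟨fun j => ?_, fun B hB => ?_⟩, ?_⟩
  · exact sum_nonneg fun e he => hw e (mem_of_mem_erase (mem_filter.mp he).1)
  · exact (sum_edgesWithin_le_sum_charged hc hw hmin hg_mem hg_min hB).trans_eq
      (sum_fiberwise_eq_sum_filter t B g w).symm
  · rw [sum_fiberwise t g w, eq_sub_iff_add_eq, sum_erase_add _ _ (mem_edgeFinset.mpr hab)]

end Feasible

end SimpleGraph

open SimpleGraph

/-- Let `G = (M, E)` be a finite tree with `|M| ≥ 2` and nonnegative edge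
weights `w`.  Then the minimum of `∑_{j ∈ M} R j` over all feasible vectors `R : M → ℝ` equals
`∑_{e ∈ E} w e − min_{e ∈ E} w e`: every feasible `R` satisfies
`∑_{j ∈ M} R j ≥ ∑_{e ∈ E} w e − min_{e ∈ E} w e`, and some feasible `R` attains this value. -/
theorem stmt_3 {V : Type*} [Fintype V] (G : SimpleGraph V) (hT : G.IsTree)
    (hcard : 2 ≤ Fintype.card V)
    (w : Sym2 V → ℝ) (hw : ∀ e ∈ G.edgeFinset, 0 ≤ w e) :
    (∀ R : V → ℝ, (∀ j, 0 ≤ R j) →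
      (∀ B : Finset V, B ⊂ Finset.univ →
        ∑ e ∈ G.edgeFinset.filter (fun e => ∀ v ∈ e, v ∈ B), w e ≤ ∑ j ∈ B, R j) →
      (∑ e ∈ G.edgeFinset, w e) - sInf (w '' G.edgeSet) ≤ ∑ j, R j) ∧
    (∃ R : V → ℝ, (∀ j, 0 ≤ R j) ∧
      (∀ B : Finset V, B ⊂ Finset.univ →
        ∑ e ∈ G.edgeFinset.filter (fun e => ∀ v ∈ e, v ∈ B), w e ≤ ∑ j ∈ B, R j) ∧
      ∑ j, R j = (∑ e ∈ G.edgeFinset, w e) - sInf (w '' G.edgeSet)) := by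
  have hne : G.edgeSet.Nonempty := by
    rw [← Set.toFinset_nonempty, ← Finset.card_pos, ← edgeFinset]
    have := hT.card_edgeFinset
    omega
  obtain ⟨a, b, hab, hinf, hmin⟩ := exists_adj_sInf_image_edgeSet_eq hne w
  rw [hinf]
  refine ⟨fun R h0 hR => sum_sub_le_sum_of_isBridge hw ⟨h0, hR⟩ hab
    (isAcyclic_iff_forall_adj_isBridge.mp hT.isAcyclic hab), ?_⟩
  obtain ⟨R, ⟨h0, hR⟩, hsum⟩ := exists_isFeasible_sum_eq hT.connected hw hab hmin
  exact ⟨R, h0, hR, hsum⟩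
end

section
/- Let ℓ ≥ 1 and suppose the triples (S₁₂, Q₁₂, Z₁₂) and (S₂₃, Q₂₃, Z₂₃) are independent random vectors on a common finite probability space, with S₁₂ and S₂₃ valued in {0,1}^ℓ. Let U be uniformly distributed on {0,1}^ℓ and independent of all other variables, and suppose SD((S₁₂, Q₁₂, Z₁₂); (U, Q₁₂, Z₁₂)) ≤ σ and SD((S₂₃, Q₂₃, Z₂₃); (U, Q₂₃, Z₂₃)) ≤ σ. Set K = S₁₂, F = S₁₂ ⊕ S₂₃, Q = (Q₁₂, Q₂₃), Z = (Z₁₂, Z₂₃). Then SD((K, F, Q, Z); (U′, F, Q, Z)) ≤ 4σ, where U′ is uniformly distributed on {0,1}^ℓ and independent of (F, Q, Z). -/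
open scoped Classical

/-- The probability of an event `E` under the probability mass function `p` on a finite
sample space `Ω`. -/
noncomputable def prOf {Ω : Type*} [Fintype Ω] (p : Ω → ℝ) (E : Ω → Prop) : ℝ :=
  ∑ ω ∈ Finset.univ.filter E, p ω

/-- Statistical distance `SD(X; Y) = (1/2)·∑_w |P[X = w] − P[Y = w]|` between two random
variables `X Y : Ω → 𝒲` on the finite probability space given by `p`. -/
noncomputable def statDist {Ω : Type*} [Fintype Ω] (p : Ω → ℝ) {𝒲 : Type*} [Fintype 𝒲]
    (X Y : Ω → 𝒲) : ℝ :=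
  (1 / 2) * ∑ w : 𝒲, |prOf p (fun ω => X ω = w) - prOf p (fun ω => Y ω = w)|

section helpers
variable {Ω : Type*} [Fintype Ω] (p : Ω → ℝ)

lemma prOf_congr {E F : Ω → Prop} (h : ∀ ω, E ω ↔ F ω) : prOf p E = prOf p F := by
  unfold prOf
  congr 1
  apply Finset.filter_congr
  intro ω _
  simp [h ω]

lemma prOf_nonneg (hp0 : ∀ ω, 0 ≤ p ω) (E : Ω → Prop) : 0 ≤ prOf p E :=
  Finset.sum_nonneg fun ω _ => hp0 ω

lemma prOf_partition {α : Type*} [Fintype α] (V : Ω → α) (E : Ω → Prop) :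
    prOf p E = ∑ a, prOf p fun ω => E ω ∧ V ω = a := by
  classical
  unfold prOf
  rw [← Finset.sum_fiberwise (Finset.univ.filter E) V p]
  apply Finset.sum_congr rfl
  intro a _
  rw [Finset.filter_filter]
  congr!

lemma sum_prOf_eq_one (hp1 : ∑ ω, p ω = 1) {α : Type*} [Fintype α] (V : Ω → α) :
    ∑ a, prOf p (fun ω => V ω = a) = 1 := by
  classical
  rw [← hp1]
  have := prOf_partition p V (fun _ => True)
  simp only [true_and] at this
  rw [← this]
  unfold prOf
  simp

lemma sum_xorfun {ℓ : ℕ} (k : Fin ℓ → Bool) (g : (Fin ℓ → Bool) → ℝ) :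
    ∑ f : Fin ℓ → Bool, g (fun i => xor (k i) (f i)) = ∑ f, g f := by
  have hinv : Function.Involutive (fun f : Fin ℓ → Bool => fun i => xor (k i) (f i)) := by
    intro f; funext i; show xor (k i) (xor (k i) (f i)) = f i
    cases k i <;> cases f i <;> rfl
  exact Fintype.sum_equiv (hinv.toPerm _) _ _ (fun f => rfl)

lemma sum_xorfun' {ℓ : ℕ} (f : Fin ℓ → Bool) (g : (Fin ℓ → Bool) → ℝ) :
    ∑ s : Fin ℓ → Bool, g (fun i => xor (s i) (f i)) = ∑ s, g s := by
  have hinv : Function.Involutive (fun s : Fin ℓ → Bool => fun i => xor (s i) (f i)) := by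
    intro s; funext i; show xor (xor (s i) (f i)) (f i) = s i
    cases s i <;> cases f i <;> rfl
  exact Fintype.sum_equiv (hinv.toPerm _) _ _ (fun s => rfl)

lemma xorfun_eq_iff {ℓ : ℕ} (k s f : Fin ℓ → Bool) :
    (fun i => xor (k i) (s i)) = f ↔ s = fun i => xor (k i) (f i) := by
  constructor
  · rintro rfl; funext i; show s i = xor (k i) (xor (k i) (s i))
    cases k i <;> cases s i <;> rfl
  · rintro rfl; funext i; show xor (k i) (xor (k i) (f i)) = f i
    cases k i <;> cases f i <;> rfl

end helpers



lemma sum4_factor {A B C D : Type*} [Fintype A] [Fintype B] [Fintype C] [Fintype D]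
    (a : A → C → ℝ) (c : B → D → ℝ) :
    ∑ q₁ : A, ∑ q₂ : B, ∑ z₁ : C, ∑ z₂ : D, a q₁ z₁ * c q₂ z₂
      = (∑ q₁, ∑ z₁, a q₁ z₁) * (∑ q₂, ∑ z₂, c q₂ z₂) := by
  calc ∑ q₁ : A, ∑ q₂ : B, ∑ z₁ : C, ∑ z₂ : D, a q₁ z₁ * c q₂ z₂
      = ∑ q₁ : A, ∑ q₂ : B, (∑ z₁, a q₁ z₁) * (∑ z₂, c q₂ z₂) :=
        Finset.sum_congr rfl fun q₁ _ => Finset.sum_congr rfl fun q₂ _ =>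
          (Finset.sum_mul_sum _ _ _ _).symm
    _ = ∑ q₁ : A, (∑ z₁, a q₁ z₁) * (∑ q₂ : B, ∑ z₂, c q₂ z₂) :=
        Finset.sum_congr rfl fun q₁ _ => (Finset.mul_sum _ _ _).symm
    _ = _ := (Finset.sum_mul _ _ _).symm

lemma sum6_swap {A B C D E S : Type*} [Fintype A] [Fintype B] [Fintype C] [Fintype D]
    [Fintype E] [Fintype S] (g : A → B → C → D → E → S → ℝ) :
    ∑ f : A, ∑ q₁ : B, ∑ q₂ : C, ∑ z₁ : D, ∑ z₂ : E, ∑ s : S, g f q₁ q₂ z₁ z₂ s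
      = ∑ s : S, ∑ f : A, ∑ q₁ : B, ∑ q₂ : C, ∑ z₁ : D, ∑ z₂ : E, g f q₁ q₂ z₁ z₂ s := by
  calc ∑ f : A, ∑ q₁ : B, ∑ q₂ : C, ∑ z₁ : D, ∑ z₂ : E, ∑ s : S, g f q₁ q₂ z₁ z₂ s
      = ∑ f : A, ∑ q₁ : B, ∑ q₂ : C, ∑ z₁ : D, ∑ s : S, ∑ z₂ : E, g f q₁ q₂ z₁ z₂ s :=
        Finset.sum_congr rfl fun f _ => Finset.sum_congr rfl fun q₁ _ =>
          Finset.sum_congr rfl fun q₂ _ => Finset.sum_congr rfl fun z₁ _ => Finset.sum_comm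
    _ = ∑ f : A, ∑ q₁ : B, ∑ q₂ : C, ∑ s : S, ∑ z₁ : D, ∑ z₂ : E, g f q₁ q₂ z₁ z₂ s :=
        Finset.sum_congr rfl fun f _ => Finset.sum_congr rfl fun q₁ _ =>
          Finset.sum_congr rfl fun q₂ _ => Finset.sum_comm
    _ = ∑ f : A, ∑ q₁ : B, ∑ s : S, ∑ q₂ : C, ∑ z₁ : D, ∑ z₂ : E, g f q₁ q₂ z₁ z₂ s :=
        Finset.sum_congr rfl fun f _ => Finset.sum_congr rfl fun q₁ _ => Finset.sum_comm
    _ = ∑ f : A, ∑ s : S, ∑ q₁ : B, ∑ q₂ : C, ∑ z₁ : D, ∑ z₂ : E, g f q₁ q₂ z₁ z₂ s :=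
        Finset.sum_congr rfl fun f _ => Finset.sum_comm
    _ = _ := Finset.sum_comm

lemma arith_main {B Q1 Q2 Z1 Z2 : Type*} [Fintype B] [Fintype Q1] [Fintype Q2]
    [Fintype Z1] [Fintype Z2]
    (xf : B → B → B)
    (hxf1 : ∀ (k : B) (g : B → ℝ), ∑ f, g (xf k f) = ∑ f, g f)
    (hxf2 : ∀ (f : B) (g : B → ℝ), ∑ s, g (xf s f) = ∑ s, g s)
    (p1 : B → Q1 → Z1 → ℝ) (p2 : B → Q2 → Z2 → ℝ) (m1 : Q1 → Z1 → ℝ) (m2 : Q2 → Z2 → ℝ)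
    (n σ : ℝ) (hn : 0 < n) (hcard : (Fintype.card B : ℝ) = n) (hσ : 0 ≤ σ)
    (hp2nn : ∀ s q z, 0 ≤ p2 s q z)
    (hm1nn : ∀ q z, 0 ≤ m1 q z)
    (hm2 : ∀ q z, m2 q z = ∑ s, p2 s q z)
    (hm1tot : ∑ q, ∑ z, m1 q z = 1)
    (hp2tot : ∑ s, ∑ q, ∑ z, p2 s q z = 1)
    (h1 : (1/2) * ∑ s, ∑ q, ∑ z, |p1 s q z - 1/n * m1 q z| ≤ σ)
    (h2 : (1/2) * ∑ s, ∑ q, ∑ z, |p2 s q z - 1/n * m2 q z| ≤ σ) :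
    (1/2) * ∑ k, ∑ f, ∑ q₁, ∑ q₂, ∑ z₁, ∑ z₂,
        |p1 k q₁ z₁ * p2 (xf k f) q₂ z₂ - 1/n * ∑ s, p1 s q₁ z₁ * p2 (xf s f) q₂ z₂|
      ≤ 4 * σ := by
  classical
  -- pointwise triangle bound
  have key : ∀ (k f : B) (q₁ : Q1) (q₂ : Q2) (z₁ : Z1) (z₂ : Z2),
      |p1 k q₁ z₁ * p2 (xf k f) q₂ z₂ - 1/n * ∑ s, p1 s q₁ z₁ * p2 (xf s f) q₂ z₂|
        ≤ |p1 k q₁ z₁ - 1/n * m1 q₁ z₁| * p2 (xf k f) q₂ z₂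
          + (1/n * m1 q₁ z₁) * |p2 (xf k f) q₂ z₂ - 1/n * m2 q₂ z₂|
          + 1/n * ∑ s, |p1 s q₁ z₁ - 1/n * m1 q₁ z₁| * p2 (xf s f) q₂ z₂ := by
    intro k f q₁ q₂ z₁ z₂
    have h2' : ∑ s, p2 (xf s f) q₂ z₂ = m2 q₂ z₂ := by
      rw [hm2 q₂ z₂]; exact hxf2 f (fun t => p2 t q₂ z₂)
    have hJm : (1/n * m1 q₁ z₁) * m2 q₂ z₂ - ∑ s, p1 s q₁ z₁ * p2 (xf s f) q₂ z₂
        = - ∑ s, (p1 s q₁ z₁ - 1/n * m1 q₁ z₁) * p2 (xf s f) q₂ z₂ := by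
      rw [← h2', Finset.mul_sum, ← Finset.sum_sub_distrib, ← Finset.sum_neg_distrib]
      exact Finset.sum_congr rfl fun s _ => by ring
    calc |p1 k q₁ z₁ * p2 (xf k f) q₂ z₂ - 1/n * ∑ s, p1 s q₁ z₁ * p2 (xf s f) q₂ z₂|
        = |(p1 k q₁ z₁ - 1/n * m1 q₁ z₁) * p2 (xf k f) q₂ z₂
            + (1/n * m1 q₁ z₁) * (p2 (xf k f) q₂ z₂ - 1/n * m2 q₂ z₂)
            + 1/n * ((1/n * m1 q₁ z₁) * m2 q₂ z₂
                - ∑ s, p1 s q₁ z₁ * p2 (xf s f) q₂ z₂)| := by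
          congr 1; ring
      _ ≤ |(p1 k q₁ z₁ - 1/n * m1 q₁ z₁) * p2 (xf k f) q₂ z₂|
            + |(1/n * m1 q₁ z₁) * (p2 (xf k f) q₂ z₂ - 1/n * m2 q₂ z₂)|
            + |1/n * ((1/n * m1 q₁ z₁) * m2 q₂ z₂
                - ∑ s, p1 s q₁ z₁ * p2 (xf s f) q₂ z₂)| := abs_add_three _ _ _
      _ ≤ _ := by
          have e1 : |(p1 k q₁ z₁ - 1/n * m1 q₁ z₁) * p2 (xf k f) q₂ z₂|
              = |p1 k q₁ z₁ - 1/n * m1 q₁ z₁| * p2 (xf k f) q₂ z₂ := by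
            rw [abs_mul, abs_of_nonneg (hp2nn _ _ _)]
          have e2 : |(1/n * m1 q₁ z₁) * (p2 (xf k f) q₂ z₂ - 1/n * m2 q₂ z₂)|
              = (1/n * m1 q₁ z₁) * |p2 (xf k f) q₂ z₂ - 1/n * m2 q₂ z₂| := by
            rw [abs_mul, abs_of_nonneg (mul_nonneg (by positivity) (hm1nn q₁ z₁))]
          have e3 : |1/n * ((1/n * m1 q₁ z₁) * m2 q₂ z₂
                - ∑ s, p1 s q₁ z₁ * p2 (xf s f) q₂ z₂)|
              ≤ 1/n * ∑ s, |p1 s q₁ z₁ - 1/n * m1 q₁ z₁| * p2 (xf s f) q₂ z₂ := by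
            rw [abs_mul, abs_of_nonneg (by positivity : (0:ℝ) ≤ 1/n), hJm, abs_neg]
            refine mul_le_mul_of_nonneg_left ?_ (by positivity)
            refine (Finset.abs_sum_le_sum_abs _ _).trans (le_of_eq ?_)
            exact Finset.sum_congr rfl fun s _ => by
              rw [abs_mul, abs_of_nonneg (hp2nn _ _ _)]
          linarith [e1, e2, e3]
  -- sum the three error terms
  have hE1 : ∑ k, ∑ f, ∑ q₁, ∑ q₂, ∑ z₁, ∑ z₂,
      |p1 k q₁ z₁ - 1/n * m1 q₁ z₁| * p2 (xf k f) q₂ z₂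
      = ∑ k, ∑ q₁, ∑ z₁, |p1 k q₁ z₁ - 1/n * m1 q₁ z₁| := by
    refine Finset.sum_congr rfl fun k _ => ?_
    calc ∑ f, ∑ q₁, ∑ q₂, ∑ z₁, ∑ z₂, |p1 k q₁ z₁ - 1/n * m1 q₁ z₁| * p2 (xf k f) q₂ z₂
        = ∑ f, (∑ q₁, ∑ z₁, |p1 k q₁ z₁ - 1/n * m1 q₁ z₁|)
            * (∑ q₂, ∑ z₂, p2 (xf k f) q₂ z₂) :=
          Finset.sum_congr rfl fun f _ => sum4_factor _ _
      _ = (∑ q₁, ∑ z₁, |p1 k q₁ z₁ - 1/n * m1 q₁ z₁|)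
            * (∑ f, ∑ q₂, ∑ z₂, p2 (xf k f) q₂ z₂) := (Finset.mul_sum _ _ _).symm
      _ = (∑ q₁, ∑ z₁, |p1 k q₁ z₁ - 1/n * m1 q₁ z₁|) * 1 := by
          congr 1
          rw [show (∑ f, ∑ q₂, ∑ z₂, p2 (xf k f) q₂ z₂)
              = ∑ f, ∑ q₂, ∑ z₂, p2 f q₂ z₂ from hxf1 k (fun t => ∑ q₂, ∑ z₂, p2 t q₂ z₂)]
          exact hp2tot
      _ = _ := mul_one _
  have hE2 : ∑ k, ∑ f, ∑ q₁, ∑ q₂, ∑ z₁, ∑ z₂,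
      (1/n * m1 q₁ z₁) * |p2 (xf k f) q₂ z₂ - 1/n * m2 q₂ z₂|
      = ∑ t, ∑ q₂, ∑ z₂, |p2 t q₂ z₂ - 1/n * m2 q₂ z₂| := by
    have hper : ∀ k : B, ∑ f, ∑ q₁, ∑ q₂, ∑ z₁, ∑ z₂,
        (1/n * m1 q₁ z₁) * |p2 (xf k f) q₂ z₂ - 1/n * m2 q₂ z₂|
        = 1/n * ∑ t, ∑ q₂, ∑ z₂, |p2 t q₂ z₂ - 1/n * m2 q₂ z₂| := by
      intro k
      calc ∑ f, ∑ q₁, ∑ q₂, ∑ z₁, ∑ z₂,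
            (1/n * m1 q₁ z₁) * |p2 (xf k f) q₂ z₂ - 1/n * m2 q₂ z₂|
          = ∑ f, (∑ q₁, ∑ z₁, 1/n * m1 q₁ z₁)
              * (∑ q₂, ∑ z₂, |p2 (xf k f) q₂ z₂ - 1/n * m2 q₂ z₂|) :=
            Finset.sum_congr rfl fun f _ => sum4_factor _ _
        _ = ∑ f, (1/n) * (∑ q₂, ∑ z₂, |p2 (xf k f) q₂ z₂ - 1/n * m2 q₂ z₂|) := by
            refine Finset.sum_congr rfl fun f _ => ?_
            congr 1
            rw [show (∑ q₁, ∑ z₁, 1/n * m1 q₁ z₁) = 1/n * ∑ q₁, ∑ z₁, m1 q₁ z₁ by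
              simp only [← Finset.mul_sum], hm1tot, mul_one]
        _ = (1/n) * ∑ f, ∑ q₂, ∑ z₂, |p2 (xf k f) q₂ z₂ - 1/n * m2 q₂ z₂| :=
            (Finset.mul_sum _ _ _).symm
        _ = 1/n * ∑ t, ∑ q₂, ∑ z₂, |p2 t q₂ z₂ - 1/n * m2 q₂ z₂| := by
            congr 1
            exact hxf1 k (fun t => ∑ q₂, ∑ z₂, |p2 t q₂ z₂ - 1/n * m2 q₂ z₂|)
    have hc := Finset.sum_congr (rfl : (Finset.univ : Finset B) = Finset.univ)
      (fun k _ => hper k)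
    rw [hc, Finset.sum_const, Finset.card_univ, nsmul_eq_mul, hcard]
    field_simp
  have hE3 : ∑ _k : B, ∑ f, ∑ q₁, ∑ q₂, ∑ z₁, ∑ z₂,
      (1/n * ∑ s, |p1 s q₁ z₁ - 1/n * m1 q₁ z₁| * p2 (xf s f) q₂ z₂)
      = ∑ s, ∑ q₁, ∑ z₁, |p1 s q₁ z₁ - 1/n * m1 q₁ z₁| := by
    have hper : ∀ k : B, ∑ f, ∑ q₁, ∑ q₂, ∑ z₁, ∑ z₂,
        (1/n * ∑ s, |p1 s q₁ z₁ - 1/n * m1 q₁ z₁| * p2 (xf s f) q₂ z₂)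
        = 1/n * ∑ s, ∑ q₁, ∑ z₁, |p1 s q₁ z₁ - 1/n * m1 q₁ z₁| := by
      intro k
      calc ∑ f, ∑ q₁, ∑ q₂, ∑ z₁, ∑ z₂,
            (1/n * ∑ s, |p1 s q₁ z₁ - 1/n * m1 q₁ z₁| * p2 (xf s f) q₂ z₂)
          = 1/n * ∑ f, ∑ q₁, ∑ q₂, ∑ z₁, ∑ z₂, ∑ s,
              |p1 s q₁ z₁ - 1/n * m1 q₁ z₁| * p2 (xf s f) q₂ z₂ := by
            simp only [← Finset.mul_sum]
        _ = 1/n * ∑ s, ∑ f, ∑ q₁, ∑ q₂, ∑ z₁, ∑ z₂,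
              |p1 s q₁ z₁ - 1/n * m1 q₁ z₁| * p2 (xf s f) q₂ z₂ := by
            rw [sum6_swap]
        _ = 1/n * ∑ s, ∑ q₁, ∑ z₁, |p1 s q₁ z₁ - 1/n * m1 q₁ z₁| := by
            refine congrArg (fun x => 1/n * x) ?_
            refine Finset.sum_congr rfl fun s _ => ?_
            calc ∑ f, ∑ q₁, ∑ q₂, ∑ z₁, ∑ z₂,
                  |p1 s q₁ z₁ - 1/n * m1 q₁ z₁| * p2 (xf s f) q₂ z₂
                = ∑ f, (∑ q₁, ∑ z₁, |p1 s q₁ z₁ - 1/n * m1 q₁ z₁|)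
                    * (∑ q₂, ∑ z₂, p2 (xf s f) q₂ z₂) :=
                  Finset.sum_congr rfl fun f _ => sum4_factor _ _
              _ = (∑ q₁, ∑ z₁, |p1 s q₁ z₁ - 1/n * m1 q₁ z₁|)
                    * (∑ f, ∑ q₂, ∑ z₂, p2 (xf s f) q₂ z₂) := (Finset.mul_sum _ _ _).symm
              _ = (∑ q₁, ∑ z₁, |p1 s q₁ z₁ - 1/n * m1 q₁ z₁|) * 1 := by
                  congr 1
                  rw [show (∑ f, ∑ q₂, ∑ z₂, p2 (xf s f) q₂ z₂)
                      = ∑ f, ∑ q₂, ∑ z₂, p2 f q₂ z₂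
                    from hxf1 s (fun t => ∑ q₂, ∑ z₂, p2 t q₂ z₂)]
                  exact hp2tot
              _ = _ := mul_one _
    have hc := Finset.sum_congr (rfl : (Finset.univ : Finset B) = Finset.univ)
      (fun k _ => hper k)
    rw [hc, Finset.sum_const, Finset.card_univ, nsmul_eq_mul, hcard]
    field_simp
  -- combine
  have hsum : ∑ k, ∑ f, ∑ q₁, ∑ q₂, ∑ z₁, ∑ z₂,
      |p1 k q₁ z₁ * p2 (xf k f) q₂ z₂ - 1/n * ∑ s, p1 s q₁ z₁ * p2 (xf s f) q₂ z₂|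
      ≤ (∑ k, ∑ q₁, ∑ z₁, |p1 k q₁ z₁ - 1/n * m1 q₁ z₁|)
        + (∑ t, ∑ q₂, ∑ z₂, |p2 t q₂ z₂ - 1/n * m2 q₂ z₂|)
        + (∑ s, ∑ q₁, ∑ z₁, |p1 s q₁ z₁ - 1/n * m1 q₁ z₁|) := by
    calc ∑ k, ∑ f, ∑ q₁, ∑ q₂, ∑ z₁, ∑ z₂,
        |p1 k q₁ z₁ * p2 (xf k f) q₂ z₂ - 1/n * ∑ s, p1 s q₁ z₁ * p2 (xf s f) q₂ z₂|
        ≤ ∑ k, ∑ f, ∑ q₁, ∑ q₂, ∑ z₁, ∑ z₂,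
            (|p1 k q₁ z₁ - 1/n * m1 q₁ z₁| * p2 (xf k f) q₂ z₂
              + (1/n * m1 q₁ z₁) * |p2 (xf k f) q₂ z₂ - 1/n * m2 q₂ z₂|
              + 1/n * ∑ s, |p1 s q₁ z₁ - 1/n * m1 q₁ z₁| * p2 (xf s f) q₂ z₂) :=
          Finset.sum_le_sum fun k _ => Finset.sum_le_sum fun f _ =>
            Finset.sum_le_sum fun q₁ _ => Finset.sum_le_sum fun q₂ _ =>
            Finset.sum_le_sum fun z₁ _ => Finset.sum_le_sum fun z₂ _ => key k f q₁ q₂ z₁ z₂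
      _ = _ := by
          simp only [Finset.sum_add_distrib]
          rw [hE1, hE2, hE3]
  linarith [hsum, h1, h2]


set_option maxHeartbeats 1600000 in
/-- Let `ℓ ≥ 1` and suppose the triples `(S₁₂, Q₁₂, Z₁₂)` and
`(S₂₃, Q₂₃, Z₂₃)` are independent random vectors on a common finite probability space, with
`S₁₂, S₂₃` valued in `{0,1}^ℓ`.  Let `U` be uniform on `{0,1}^ℓ` and independent of all other
variables, and suppose `SD((S₁₂, Q₁₂, Z₁₂); (U, Q₁₂, Z₁₂)) ≤ σ` and
`SD((S₂₃, Q₂₃, Z₂₃); (U, Q₂₃, Z₂₃)) ≤ σ`.  Set `K = S₁₂`, `F = S₁₂ ⊕ S₂₃`, `Q = (Q₁₂, Q₂₃)`,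
`Z = (Z₁₂, Z₂₃)`.  Then `SD((K, F, Q, Z); (U', F, Q, Z)) ≤ 4σ`, where `U'` is uniform on
`{0,1}^ℓ` and independent of `(F, Q, Z)`. -/
theorem stmt_14 {Ω : Type*} [Fintype Ω] (p : Ω → ℝ)
    (hp0 : ∀ ω, 0 ≤ p ω) (hp1 : ∑ ω, p ω = 1)
    (ℓ : ℕ) (hℓ : 1 ≤ ℓ)
    {𝒬₁₂ 𝒬₂₃ 𝒵₁₂ 𝒵₂₃ : Type*} [Fintype 𝒬₁₂] [Fintype 𝒬₂₃] [Fintype 𝒵₁₂] [Fintype 𝒵₂₃]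
    (S₁₂ S₂₃ : Ω → (Fin ℓ → Bool)) (Q₁₂ : Ω → 𝒬₁₂) (Q₂₃ : Ω → 𝒬₂₃)
    (Z₁₂ : Ω → 𝒵₁₂) (Z₂₃ : Ω → 𝒵₂₃)
    (U U' : Ω → (Fin ℓ → Bool))
    (hindep : ∀ (s₁₂ s₂₃ : Fin ℓ → Bool) (q₁₂ : 𝒬₁₂) (q₂₃ : 𝒬₂₃) (z₁₂ : 𝒵₁₂) (z₂₃ : 𝒵₂₃),
      prOf p (fun ω => (S₁₂ ω = s₁₂ ∧ Q₁₂ ω = q₁₂ ∧ Z₁₂ ω = z₁₂)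
          ∧ (S₂₃ ω = s₂₃ ∧ Q₂₃ ω = q₂₃ ∧ Z₂₃ ω = z₂₃))
        = prOf p (fun ω => S₁₂ ω = s₁₂ ∧ Q₁₂ ω = q₁₂ ∧ Z₁₂ ω = z₁₂)
          * prOf p (fun ω => S₂₃ ω = s₂₃ ∧ Q₂₃ ω = q₂₃ ∧ Z₂₃ ω = z₂₃))
    (hU : ∀ u, prOf p (fun ω => U ω = u) = 1 / Fintype.card (Fin ℓ → Bool))
    (hUind : ∀ (u s₁₂ s₂₃ : Fin ℓ → Bool) (q₁₂ : 𝒬₁₂) (q₂₃ : 𝒬₂₃) (z₁₂ : 𝒵₁₂) (z₂₃ : 𝒵₂₃),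
      prOf p (fun ω => U ω = u ∧ S₁₂ ω = s₁₂ ∧ S₂₃ ω = s₂₃ ∧ Q₁₂ ω = q₁₂ ∧ Q₂₃ ω = q₂₃
          ∧ Z₁₂ ω = z₁₂ ∧ Z₂₃ ω = z₂₃)
        = prOf p (fun ω => U ω = u)
          * prOf p (fun ω => S₁₂ ω = s₁₂ ∧ S₂₃ ω = s₂₃ ∧ Q₁₂ ω = q₁₂ ∧ Q₂₃ ω = q₂₃
              ∧ Z₁₂ ω = z₁₂ ∧ Z₂₃ ω = z₂₃))
    (hU' : ∀ u, prOf p (fun ω => U' ω = u) = 1 / Fintype.card (Fin ℓ → Bool))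
    (hU'ind : ∀ (u f : Fin ℓ → Bool) (q₁₂ : 𝒬₁₂) (q₂₃ : 𝒬₂₃) (z₁₂ : 𝒵₁₂) (z₂₃ : 𝒵₂₃),
      prOf p (fun ω => U' ω = u ∧ (fun k => xor (S₁₂ ω k) (S₂₃ ω k)) = f
          ∧ Q₁₂ ω = q₁₂ ∧ Q₂₃ ω = q₂₃ ∧ Z₁₂ ω = z₁₂ ∧ Z₂₃ ω = z₂₃)
        = prOf p (fun ω => U' ω = u)
          * prOf p (fun ω => (fun k => xor (S₁₂ ω k) (S₂₃ ω k)) = f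
              ∧ Q₁₂ ω = q₁₂ ∧ Q₂₃ ω = q₂₃ ∧ Z₁₂ ω = z₁₂ ∧ Z₂₃ ω = z₂₃))
    (σ : ℝ)
    (h12 : statDist p (fun ω => (S₁₂ ω, Q₁₂ ω, Z₁₂ ω)) (fun ω => (U ω, Q₁₂ ω, Z₁₂ ω)) ≤ σ)
    (h23 : statDist p (fun ω => (S₂₃ ω, Q₂₃ ω, Z₂₃ ω)) (fun ω => (U ω, Q₂₃ ω, Z₂₃ ω)) ≤ σ) :
    statDist p
        (fun ω => (S₁₂ ω, (fun k => xor (S₁₂ ω k) (S₂₃ ω k)), (Q₁₂ ω, Q₂₃ ω), (Z₁₂ ω, Z₂₃ ω)))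
        (fun ω => (U' ω, (fun k => xor (S₁₂ ω k) (S₂₃ ω k)), (Q₁₂ ω, Q₂₃ ω), (Z₁₂ ω, Z₂₃ ω)))
      ≤ 4 * σ := by
  classical
  have hσ0 : 0 ≤ σ := le_trans (by unfold statDist; positivity) h12
  have hn : (0:ℝ) < (Fintype.card (Fin ℓ → Bool) : ℝ) := by exact_mod_cast Fintype.card_pos
  -- uniformity of U joint with each pair of side variables
  have hU12 : ∀ (u : Fin ℓ → Bool) (q : 𝒬₁₂) (z : 𝒵₁₂),
      prOf p (fun ω => U ω = u ∧ Q₁₂ ω = q ∧ Z₁₂ ω = z)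
        = 1 / (Fintype.card (Fin ℓ → Bool) : ℝ)
          * prOf p (fun ω => Q₁₂ ω = q ∧ Z₁₂ ω = z) := by
    intro u q z
    rw [prOf_partition p (fun ω => (S₁₂ ω, S₂₃ ω, Q₂₃ ω, Z₂₃ ω))
          (fun ω => U ω = u ∧ Q₁₂ ω = q ∧ Z₁₂ ω = z),
        prOf_partition p (fun ω => (S₁₂ ω, S₂₃ ω, Q₂₃ ω, Z₂₃ ω))
          (fun ω => Q₁₂ ω = q ∧ Z₁₂ ω = z),
        Finset.mul_sum]
    refine Finset.sum_congr rfl ?_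
    rintro ⟨s₁, s₂, q₂, z₂⟩ _
    rw [show prOf p (fun ω => (U ω = u ∧ Q₁₂ ω = q ∧ Z₁₂ ω = z)
          ∧ (S₁₂ ω, S₂₃ ω, Q₂₃ ω, Z₂₃ ω) = (s₁, s₂, q₂, z₂))
        = prOf p (fun ω => U ω = u ∧ S₁₂ ω = s₁ ∧ S₂₃ ω = s₂ ∧ Q₁₂ ω = q ∧ Q₂₃ ω = q₂
            ∧ Z₁₂ ω = z ∧ Z₂₃ ω = z₂)
        from prOf_congr p fun ω => by simp only [Prod.mk.injEq]; tauto,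
      hUind, hU u,
      show prOf p (fun ω => (Q₁₂ ω = q ∧ Z₁₂ ω = z)
          ∧ (S₁₂ ω, S₂₃ ω, Q₂₃ ω, Z₂₃ ω) = (s₁, s₂, q₂, z₂))
        = prOf p (fun ω => S₁₂ ω = s₁ ∧ S₂₃ ω = s₂ ∧ Q₁₂ ω = q ∧ Q₂₃ ω = q₂
            ∧ Z₁₂ ω = z ∧ Z₂₃ ω = z₂)
        from prOf_congr p fun ω => by simp only [Prod.mk.injEq]; tauto]
  have hU23 : ∀ (u : Fin ℓ → Bool) (q : 𝒬₂₃) (z : 𝒵₂₃),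
      prOf p (fun ω => U ω = u ∧ Q₂₃ ω = q ∧ Z₂₃ ω = z)
        = 1 / (Fintype.card (Fin ℓ → Bool) : ℝ)
          * prOf p (fun ω => Q₂₃ ω = q ∧ Z₂₃ ω = z) := by
    intro u q z
    rw [prOf_partition p (fun ω => (S₁₂ ω, S₂₃ ω, Q₁₂ ω, Z₁₂ ω))
          (fun ω => U ω = u ∧ Q₂₃ ω = q ∧ Z₂₃ ω = z),
        prOf_partition p (fun ω => (S₁₂ ω, S₂₃ ω, Q₁₂ ω, Z₁₂ ω))
          (fun ω => Q₂₃ ω = q ∧ Z₂₃ ω = z),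
        Finset.mul_sum]
    refine Finset.sum_congr rfl ?_
    rintro ⟨s₁, s₂, q₁, z₁⟩ _
    rw [show prOf p (fun ω => (U ω = u ∧ Q₂₃ ω = q ∧ Z₂₃ ω = z)
          ∧ (S₁₂ ω, S₂₃ ω, Q₁₂ ω, Z₁₂ ω) = (s₁, s₂, q₁, z₁))
        = prOf p (fun ω => U ω = u ∧ S₁₂ ω = s₁ ∧ S₂₃ ω = s₂ ∧ Q₁₂ ω = q₁ ∧ Q₂₃ ω = q
            ∧ Z₁₂ ω = z₁ ∧ Z₂₃ ω = z)
        from prOf_congr p fun ω => by simp only [Prod.mk.injEq]; tauto,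
      hUind, hU u,
      show prOf p (fun ω => (Q₂₃ ω = q ∧ Z₂₃ ω = z)
          ∧ (S₁₂ ω, S₂₃ ω, Q₁₂ ω, Z₁₂ ω) = (s₁, s₂, q₁, z₁))
        = prOf p (fun ω => S₁₂ ω = s₁ ∧ S₂₃ ω = s₂ ∧ Q₁₂ ω = q₁ ∧ Q₂₃ ω = q
            ∧ Z₁₂ ω = z₁ ∧ Z₂₃ ω = z)
        from prOf_congr p fun ω => by simp only [Prod.mk.injEq]; tauto]
  -- convert the two statistical-distance hypotheses
  have h1 : (1/2) * ∑ s, ∑ q, ∑ z,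
      |prOf p (fun ω => S₁₂ ω = s ∧ Q₁₂ ω = q ∧ Z₁₂ ω = z)
        - 1 / (Fintype.card (Fin ℓ → Bool) : ℝ)
          * prOf p (fun ω => Q₁₂ ω = q ∧ Z₁₂ ω = z)| ≤ σ := by
    refine le_trans (le_of_eq ?_) h12
    unfold statDist
    simp only [Fintype.sum_prod_type]
    congr 1
    refine Finset.sum_congr rfl fun s _ => Finset.sum_congr rfl fun q _ =>
      Finset.sum_congr rfl fun z _ => ?_
    rw [show prOf p (fun ω => (S₁₂ ω, Q₁₂ ω, Z₁₂ ω) = (s, q, z))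
        = prOf p (fun ω => S₁₂ ω = s ∧ Q₁₂ ω = q ∧ Z₁₂ ω = z)
        from prOf_congr p fun ω => by simp only [Prod.mk.injEq],
      show prOf p (fun ω => (U ω, Q₁₂ ω, Z₁₂ ω) = (s, q, z))
        = prOf p (fun ω => U ω = s ∧ Q₁₂ ω = q ∧ Z₁₂ ω = z)
        from prOf_congr p fun ω => by simp only [Prod.mk.injEq],
      hU12 s q z]
  have h2 : (1/2) * ∑ s, ∑ q, ∑ z,
      |prOf p (fun ω => S₂₃ ω = s ∧ Q₂₃ ω = q ∧ Z₂₃ ω = z)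
        - 1 / (Fintype.card (Fin ℓ → Bool) : ℝ)
          * prOf p (fun ω => Q₂₃ ω = q ∧ Z₂₃ ω = z)| ≤ σ := by
    refine le_trans (le_of_eq ?_) h23
    unfold statDist
    simp only [Fintype.sum_prod_type]
    congr 1
    refine Finset.sum_congr rfl fun s _ => Finset.sum_congr rfl fun q _ =>
      Finset.sum_congr rfl fun z _ => ?_
    rw [show prOf p (fun ω => (S₂₃ ω, Q₂₃ ω, Z₂₃ ω) = (s, q, z))
        = prOf p (fun ω => S₂₃ ω = s ∧ Q₂₃ ω = q ∧ Z₂₃ ω = z)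
        from prOf_congr p fun ω => by simp only [Prod.mk.injEq],
      show prOf p (fun ω => (U ω, Q₂₃ ω, Z₂₃ ω) = (s, q, z))
        = prOf p (fun ω => U ω = s ∧ Q₂₃ ω = q ∧ Z₂₃ ω = z)
        from prOf_congr p fun ω => by simp only [Prod.mk.injEq],
      hU23 s q z]
  -- marginals and totals
  have hm2 : ∀ (q : 𝒬₂₃) (z : 𝒵₂₃),
      prOf p (fun ω => Q₂₃ ω = q ∧ Z₂₃ ω = z)
        = ∑ s, prOf p (fun ω => S₂₃ ω = s ∧ Q₂₃ ω = q ∧ Z₂₃ ω = z) := by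
    intro q z
    rw [prOf_partition p S₂₃ (fun ω => Q₂₃ ω = q ∧ Z₂₃ ω = z)]
    exact Finset.sum_congr rfl fun s _ => prOf_congr p fun ω => by tauto
  have hm1tot : ∑ q, ∑ z, prOf p (fun ω => Q₁₂ ω = q ∧ Z₁₂ ω = z) = 1 := by
    have h := sum_prOf_eq_one p hp1 (fun ω => (Q₁₂ ω, Z₁₂ ω))
    rw [Fintype.sum_prod_type] at h
    rw [← h]
    exact Finset.sum_congr rfl fun q _ => Finset.sum_congr rfl fun z _ =>
      prOf_congr p fun ω => by simp only [Prod.mk.injEq]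
  have hp2tot : ∑ s, ∑ q, ∑ z,
      prOf p (fun ω => S₂₃ ω = s ∧ Q₂₃ ω = q ∧ Z₂₃ ω = z) = 1 := by
    have h := sum_prOf_eq_one p hp1 (fun ω => (S₂₃ ω, Q₂₃ ω, Z₂₃ ω))
    simp only [Fintype.sum_prod_type] at h
    rw [← h]
    exact Finset.sum_congr rfl fun s _ => Finset.sum_congr rfl fun q _ =>
      Finset.sum_congr rfl fun z _ => prOf_congr p fun ω => by simp only [Prod.mk.injEq]
  -- pointwise identities for the goal distributions
  have hXpt : ∀ (k f : Fin ℓ → Bool) (q₁ : 𝒬₁₂) (q₂ : 𝒬₂₃) (z₁ : 𝒵₁₂) (z₂ : 𝒵₂₃),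
      prOf p (fun ω => (S₁₂ ω, (fun i => xor (S₁₂ ω i) (S₂₃ ω i)), (Q₁₂ ω, Q₂₃ ω),
          (Z₁₂ ω, Z₂₃ ω)) = (k, f, (q₁, q₂), (z₁, z₂)))
        = prOf p (fun ω => S₁₂ ω = k ∧ Q₁₂ ω = q₁ ∧ Z₁₂ ω = z₁)
          * prOf p (fun ω => S₂₃ ω = (fun i => xor (k i) (f i)) ∧ Q₂₃ ω = q₂
              ∧ Z₂₃ ω = z₂) := by
    intro k f q₁ q₂ z₁ z₂
    rw [← hindep]
    apply prOf_congr
    intro ω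
    simp only [Prod.mk.injEq]
    constructor
    · rintro ⟨hk, hf, ⟨hq1, hq2⟩, hz1, hz2⟩
      subst hk
      exact ⟨⟨rfl, hq1, hz1⟩, (xorfun_eq_iff _ _ _).mp hf, hq2, hz2⟩
    · rintro ⟨⟨hk, hq1, hz1⟩, hs2, hq2, hz2⟩
      subst hk
      exact ⟨rfl, (xorfun_eq_iff _ _ _).mpr hs2, ⟨hq1, hq2⟩, hz1, hz2⟩
  have hYpt : ∀ (u f : Fin ℓ → Bool) (q₁ : 𝒬₁₂) (q₂ : 𝒬₂₃) (z₁ : 𝒵₁₂) (z₂ : 𝒵₂₃),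
      prOf p (fun ω => (U' ω, (fun i => xor (S₁₂ ω i) (S₂₃ ω i)), (Q₁₂ ω, Q₂₃ ω),
          (Z₁₂ ω, Z₂₃ ω)) = (u, f, (q₁, q₂), (z₁, z₂)))
        = 1 / (Fintype.card (Fin ℓ → Bool) : ℝ)
          * ∑ s, prOf p (fun ω => S₁₂ ω = s ∧ Q₁₂ ω = q₁ ∧ Z₁₂ ω = z₁)
              * prOf p (fun ω => S₂₃ ω = (fun i => xor (s i) (f i)) ∧ Q₂₃ ω = q₂
                  ∧ Z₂₃ ω = z₂) := by
    intro u f q₁ q₂ z₁ z₂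
    rw [show prOf p (fun ω => (U' ω, (fun i => xor (S₁₂ ω i) (S₂₃ ω i)), (Q₁₂ ω, Q₂₃ ω),
          (Z₁₂ ω, Z₂₃ ω)) = (u, f, (q₁, q₂), (z₁, z₂)))
        = prOf p (fun ω => U' ω = u ∧ (fun k => xor (S₁₂ ω k) (S₂₃ ω k)) = f
            ∧ Q₁₂ ω = q₁ ∧ Q₂₃ ω = q₂ ∧ Z₁₂ ω = z₁ ∧ Z₂₃ ω = z₂)
        from prOf_congr p fun ω => by simp only [Prod.mk.injEq]; tauto,
      hU'ind u f q₁ q₂ z₁ z₂, hU' u]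
    congr 1
    rw [prOf_partition p S₁₂ (fun ω => (fun k => xor (S₁₂ ω k) (S₂₃ ω k)) = f
        ∧ Q₁₂ ω = q₁ ∧ Q₂₃ ω = q₂ ∧ Z₁₂ ω = z₁ ∧ Z₂₃ ω = z₂)]
    refine Finset.sum_congr rfl fun s _ => ?_
    rw [← hindep s (fun i => xor (s i) (f i)) q₁ q₂ z₁ z₂]
    apply prOf_congr
    intro ω
    constructor
    · rintro ⟨⟨hf, hq1, hq2, hz1, hz2⟩, hs⟩
      subst hs
      exact ⟨⟨rfl, hq1, hz1⟩, (xorfun_eq_iff _ _ _).mp hf, hq2, hz2⟩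
    · rintro ⟨⟨hs, hq1, hz1⟩, hs2, hq2, hz2⟩
      subst hs
      exact ⟨⟨(xorfun_eq_iff _ _ _).mpr hs2, hq1, hq2, hz1, hz2⟩, rfl⟩
  -- convert the goal and finish with the arithmetic lemma
  have egoal : statDist p
        (fun ω => (S₁₂ ω, (fun k => xor (S₁₂ ω k) (S₂₃ ω k)), (Q₁₂ ω, Q₂₃ ω), (Z₁₂ ω, Z₂₃ ω)))
        (fun ω => (U' ω, (fun k => xor (S₁₂ ω k) (S₂₃ ω k)), (Q₁₂ ω, Q₂₃ ω), (Z₁₂ ω, Z₂₃ ω)))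
      = (1/2) * ∑ k : Fin ℓ → Bool, ∑ f : Fin ℓ → Bool, ∑ q₁ : 𝒬₁₂, ∑ q₂ : 𝒬₂₃,
          ∑ z₁ : 𝒵₁₂, ∑ z₂ : 𝒵₂₃,
          |prOf p (fun ω => S₁₂ ω = k ∧ Q₁₂ ω = q₁ ∧ Z₁₂ ω = z₁)
              * prOf p (fun ω => S₂₃ ω = (fun i => xor (k i) (f i)) ∧ Q₂₃ ω = q₂
                  ∧ Z₂₃ ω = z₂)
            - 1 / (Fintype.card (Fin ℓ → Bool) : ℝ)
              * ∑ s, prOf p (fun ω => S₁₂ ω = s ∧ Q₁₂ ω = q₁ ∧ Z₁₂ ω = z₁)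
                  * prOf p (fun ω => S₂₃ ω = (fun i => xor (s i) (f i)) ∧ Q₂₃ ω = q₂
                      ∧ Z₂₃ ω = z₂)| := by
    unfold statDist
    simp only [Fintype.sum_prod_type]
    congr 1
    refine Finset.sum_congr rfl fun k _ => Finset.sum_congr rfl fun f _ =>
      Finset.sum_congr rfl fun q₁ _ => Finset.sum_congr rfl fun q₂ _ =>
      Finset.sum_congr rfl fun z₁ _ => Finset.sum_congr rfl fun z₂ _ => ?_
    rw [hXpt k f q₁ q₂ z₁ z₂, hYpt k f q₁ q₂ z₁ z₂]
  refine le_trans (le_of_eq egoal) ?_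
  exact arith_main (B := Fin ℓ → Bool)
    (fun k f => fun i => xor (k i) (f i)) sum_xorfun sum_xorfun'
    (fun s q z => prOf p fun ω => S₁₂ ω = s ∧ Q₁₂ ω = q ∧ Z₁₂ ω = z)
    (fun s q z => prOf p fun ω => S₂₃ ω = s ∧ Q₂₃ ω = q ∧ Z₂₃ ω = z)
    (fun q z => prOf p fun ω => Q₁₂ ω = q ∧ Z₁₂ ω = z)
    (fun q z => prOf p fun ω => Q₂₃ ω = q ∧ Z₂₃ ω = z)
    ((Fintype.card (Fin ℓ → Bool) : ℝ)) σ hn rfl hσ0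
    (fun s q z => prOf_nonneg p hp0 _)
    (fun q z => prOf_nonneg p hp0 _)
    hm2 hm1tot hp2tot h1 h2
end
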